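/- There exist constants C > 0 and T > 1 such that |ζ(t) − (3/4)^{2/3}·t^{4/3}| ≤ C·t^{1/3} for all t ≥ T. -/
import Mathlib


open MeasureTheory Set
open intervalIntegral

/-- The function `ζ : (−1,∞) → ℝ`, given by
`ζ(t) = ((3/2)∫₁ᵗ √(τ²−1) dτ)^{2/3}` for `t ≥ 1` and
`ζ(t) = −((3/2)∫ₜ¹ √(1−τ²) dτ)^{2/3}` for `t < 1`. -/
noncomputable def zeta (t : ℝ) : ℝ :=
  if 1 ≤ t then ((3/2) * ∫ τ in (1:ℝ)..t, Real.sqrt (τ ^ 2 - 1)) ^ ((2:ℝ)/3)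
  else -(((3/2) * ∫ τ in t..(1:ℝ), Real.sqrt (1 - τ ^ 2)) ^ ((2:ℝ)/3))

/-- `tf` is the inverse function `t(·) : (ζ(−1), ∞) → (−1, ∞)` of `ζ`. -/
def IsZetaInv (tf : ℝ → ℝ) : Prop :=
  (∀ t : ℝ, -1 < t → tf (zeta t) = t) ∧
  (∀ u : ℝ, zeta (-1) < u → -1 < tf u ∧ zeta (tf u) = u)

private lemma zeta_int_lb (t : ℝ) (ht : 1 ≤ t) :
    (t-1)^2/2 ≤ ∫ τ in (1:ℝ)..t, Real.sqrt (τ ^ 2 - 1) := by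
  have h1 : ∫ τ in (1:ℝ)..t, (τ - 1) = (t-1)^2/2 := by
    rw [intervalIntegral.integral_sub ((by continuity : Continuous _).intervalIntegrable _ _)
      ((by continuity : Continuous _).intervalIntegrable _ _), integral_id,
      intervalIntegral.integral_const]
    simp [smul_eq_mul]; ring
  rw [← h1]
  apply intervalIntegral.integral_mono_on ht
    ((by continuity : Continuous _).intervalIntegrable _ _)
    ((by continuity : Continuous _).intervalIntegrable _ _)
  intro x hx
  simp only [Set.mem_Icc] at hx
  calc x - 1 = Real.sqrt ((x-1)^2) := by rw [Real.sqrt_sq (by linarith [hx.1])]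
  _ ≤ _ := Real.sqrt_le_sqrt (by nlinarith [hx.1])

private lemma zeta_int_ub (t : ℝ) (ht : 1 ≤ t) :
    (∫ τ in (1:ℝ)..t, Real.sqrt (τ ^ 2 - 1)) ≤ t^2/2 := by
  have h1 : ∫ τ in (1:ℝ)..t, τ = (t^2-1)/2 := by rw [integral_id]; ring
  have h2 : (∫ τ in (1:ℝ)..t, Real.sqrt (τ ^ 2 - 1)) ≤ (t^2-1)/2 := by
    rw [← h1]
    apply intervalIntegral.integral_mono_on ht
      ((by continuity : Continuous _).intervalIntegrable _ _)
      ((by continuity : Continuous _).intervalIntegrable _ _)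
    intro x hx
    simp only [Set.mem_Icc] at hx
    calc Real.sqrt (x ^ 2 - 1) ≤ Real.sqrt (x^2) := Real.sqrt_le_sqrt (by nlinarith)
    _ = x := Real.sqrt_sq (by linarith [hx.1])
  linarith

private lemma zeta_cube (x : ℝ) (hx : 0 ≤ x) : (x ^ ((1:ℝ)/3)) ^ 3 = x := by
  rw [← Real.rpow_natCast (x ^ ((1:ℝ)/3)) 3, ← Real.rpow_mul hx]
  norm_num

private lemma zeta_four (x : ℝ) (hx : 0 ≤ x) : x ^ ((4:ℝ)/3) = (x ^ ((1:ℝ)/3)) ^ 4 := by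
  rw [← Real.rpow_natCast (x ^ ((1:ℝ)/3)) 4, ← Real.rpow_mul hx]
  norm_num

private lemma zeta_key (t : ℝ) (ht : 1 ≤ t) :
    t ^ ((4:ℝ)/3) - (t-1) ^ ((4:ℝ)/3) ≤ 2 * t ^ ((1:ℝ)/3) := by
  set a := t ^ ((1:ℝ)/3) with ha
  set b := (t-1) ^ ((1:ℝ)/3) with hb
  have ht0 : (0:ℝ) ≤ t := by linarith
  have ht1 : (0:ℝ) ≤ t - 1 := by linarith
  have ha3 : a ^ 3 = t := zeta_cube t ht0
  have hb3 : b ^ 3 = t - 1 := zeta_cube _ ht1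
  have hb0 : 0 ≤ b := Real.rpow_nonneg ht1 _
  have hba : b ≤ a := Real.rpow_le_rpow ht1 (by linarith) (by norm_num)
  rw [zeta_four t ht0, zeta_four _ ht1]
  nlinarith [mul_nonneg (sub_nonneg.2 hba) hb0, sq_nonneg (a-b), sq_nonneg (a+b),
    mul_nonneg (mul_nonneg hb0 hb0) hb0, sq_nonneg b, sq_nonneg a,
    mul_nonneg (sub_nonneg.2 hba) (mul_nonneg hb0 hb0)]

private lemma zeta_conv (c x : ℝ) (hc : 0 ≤ c) (hx : 0 ≤ x) :
    (c * x ^ 2) ^ ((2:ℝ)/3) = c ^ ((2:ℝ)/3) * x ^ ((4:ℝ)/3) := by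
  rw [Real.mul_rpow hc (by positivity), ← Real.rpow_natCast x 2, ← Real.rpow_mul hx]
  norm_num

/-- **Asymptotics of `ζ(t)` as `t → +∞`:** `ζ(t) = (3/4)^{2/3} t^{4/3} (1 + O(t⁻¹))`. -/
theorem zeta_asymptotics :
    ∃ C > (0:ℝ), ∃ T > (1:ℝ), ∀ t : ℝ, T ≤ t →
      |zeta t - ((3:ℝ)/4) ^ ((2:ℝ)/3) * t ^ ((4:ℝ)/3)| ≤ C * t ^ ((1:ℝ)/3) := by
  refine ⟨2, by norm_num, 2, by norm_num, fun t ht => ?_⟩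
  have ht1 : (1:ℝ) ≤ t := by linarith
  have ht0 : (0:ℝ) ≤ t := by linarith
  have ht1' : (0:ℝ) ≤ t - 1 := by linarith
  have hzeta : zeta t = ((3/2) * ∫ τ in (1:ℝ)..t, Real.sqrt (τ ^ 2 - 1)) ^ ((2:ℝ)/3) :=
    if_pos ht1
  have hlb := zeta_int_lb t ht1
  have hub := zeta_int_ub t ht1
  -- lower bound
  have hL : ((3:ℝ)/4) ^ ((2:ℝ)/3) * (t-1) ^ ((4:ℝ)/3) ≤ zeta t := by
    rw [hzeta, ← zeta_conv ((3:ℝ)/4) (t-1) (by norm_num) ht1']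
    exact Real.rpow_le_rpow (by positivity) (by linarith) (by norm_num)
  -- upper bound
  have hU : zeta t ≤ ((3:ℝ)/4) ^ ((2:ℝ)/3) * t ^ ((4:ℝ)/3) := by
    rw [hzeta, ← zeta_conv ((3:ℝ)/4) t (by norm_num) ht0]
    apply Real.rpow_le_rpow _ (by linarith) (by norm_num)
    nlinarith
  have h34 : ((3:ℝ)/4) ^ ((2:ℝ)/3) ≤ 1 :=
    Real.rpow_le_one (by norm_num) (by norm_num) (by norm_num)
  have h34' : (0:ℝ) ≤ ((3:ℝ)/4) ^ ((2:ℝ)/3) := by positivity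
  have hkey := zeta_key t ht1
  have hmono : (t-1) ^ ((4:ℝ)/3) ≤ t ^ ((4:ℝ)/3) :=
    Real.rpow_le_rpow ht1' (by linarith) (by norm_num)
  have ht13 : (0:ℝ) ≤ t ^ ((1:ℝ)/3) := Real.rpow_nonneg ht0 _
  rw [abs_le]
  constructor
  · nlinarith [mul_le_mul_of_nonneg_left hkey h34']
  · nlinarith
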